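/- The sum over triples of partitions Π = (π1,π2,π3) with total size 2 of the localization contributions C(Π) (defined as in the arm-leg product formula) equals 35. -/

import Mathlib

open MvPolynomial

/-- The field `ℚ(s₁,s₂)` of rational functions in the equivariant parameters. -/
noncomputable abbrev EqK : Type := FractionRing (MvPolynomial (Fin 2) ℚ)

/-- The equivariant parameter `s₁`. -/
noncomputable def s₁ : EqK := algebraMap (MvPolynomial (Fin 2) ℚ) EqK (X 0)

/-- The equivariant parameter `s₂`. -/
noncomputable def s₂ : EqK := algebraMap (MvPolynomial (Fin 2) ℚ) EqK (X 1)

/-- Arm length `a(b)` of a box `b = (i,j)` in a Young diagram. -/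
def armZ (μ : YoungDiagram) (b : ℕ × ℕ) : ℤ := (μ.colLen b.2 : ℤ) - b.1 - 1

/-- Leg length `l(b)` of a box `b = (i,j)` in a Young diagram. -/
def legZ (μ : YoungDiagram) (b : ℕ × ℕ) : ℤ := (μ.rowLen b.1 : ℤ) - b.2 - 1

/-- The localization factor attached to a partition playing the role of `π₂`:
`∏_{b∈π₂} [((a-l-2)s₁ - a s₂)((l-a-2)s₁ + (a+1)s₂)] /
          [((a-l-1)s₁ - a s₂)((l-a-1)s₁ + (a+1)s₂)]`. -/
noncomputable def contribFactor (u v : EqK) (μ : YoungDiagram) : EqK :=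
  ∏ b ∈ μ.cells,
    (let a : EqK := (armZ μ b : ℤ); let l : EqK := (legZ μ b : ℤ);
      ((a - l - 2) * u - a * v) * ((l - a - 2) * u + (a + 1) * v) /
        (((a - l - 1) * u - a * v) * ((l - a - 1) * u + (a + 1) * v)))

/-- The localization contribution `C(Π)` of a triple of partitions
`Π = (π₁, π₂, π₃)`: boxes of `π₁` contribute the factor 1, boxes of `π₂` and
`π₃` contribute the arm–leg factors (with the roles of `s₁, s₂` swapped). -/
noncomputable def locContrib (tr : YoungDiagram × YoungDiagram × YoungDiagram) : EqK :=
  contribFactor s₁ s₂ tr.2.1 * contribFactor s₂ s₁ tr.2.2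

/-!
Every partition in a triple of total size two is empty, a single box, or one of the two
dominoes, so exactly nine triples occur. From the arm and leg lengths of these three diagrams
each contribution is an explicit rational function of `s₁, s₂`, and the nine of them add up to
the constant `35`.
-/

namespace YoungDiagram

instance : DecidableEq YoungDiagram := fun _ _ => decidable_of_iff _ YoungDiagram.ext_iff.symm

def singleCell : YoungDiagram := ofRowLens [1] (List.sortedGE_iff_pairwise.2 (by decide))
def rowDomino : YoungDiagram := ofRowLens [2] (List.sortedGE_iff_pairwise.2 (by decide))
def colDomino : YoungDiagram := ofRowLens [1, 1] (List.sortedGE_iff_pairwise.2 (by decide))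

lemma cells_singleCell : singleCell.cells = {(0, 0)} := by decide
lemma cells_rowDomino : rowDomino.cells = {(0, 0), (0, 1)} := by decide
lemma cells_colDomino : colDomino.cells = {(0, 0), (1, 0)} := by decide

@[simp] lemma card_bot : (⊥ : YoungDiagram).card = 0 := rfl
@[simp] lemma card_singleCell : singleCell.card = 1 := by decide
@[simp] lemma card_rowDomino : rowDomino.card = 2 := by decide
@[simp] lemma card_colDomino : colDomino.card = 2 := by decide

lemma mul_le_card_of_mem {μ : YoungDiagram} {i j : ℕ} (h : (i, j) ∈ μ) :
    (i + 1) * (j + 1) ≤ μ.card := by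
  rw [← Finset.card_range (i + 1), ← Finset.card_range (j + 1), ← Finset.card_product]
  refine Finset.card_le_card fun c hc => ?_
  rw [Finset.mem_product, Finset.mem_range, Finset.mem_range] at hc
  exact μ.up_left_mem (Nat.lt_succ_iff.1 hc.1) (Nat.lt_succ_iff.1 hc.2) h

lemma zero_mem_of_nonempty {μ : YoungDiagram} (h : μ.cells.Nonempty) : (0, 0) ∈ μ := by
  obtain ⟨⟨i, j⟩, hc⟩ := h
  exact μ.up_left_mem (Nat.zero_le i) (Nat.zero_le j) hc

lemma eq_bot_or_singleCell_or_rowDomino_or_colDomino {μ : YoungDiagram} (h : μ.card ≤ 2) :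
    μ = ⊥ ∨ μ = singleCell ∨ μ = rowDomino ∨ μ = colDomino := by
  have hsub : μ.cells ⊆ {(0, 0), (0, 1), (1, 0)} := fun ⟨i, j⟩ hc => by
    have hij := (mul_le_card_of_mem hc).trans h
    have hi : i ≤ 1 := by nlinarith
    have hj : j ≤ 1 := by nlinarith
    interval_cases i <;> interval_cases j <;> simp_all
  have hcases : ∀ s ∈ ({(0, 0), (0, 1), (1, 0)} : Finset (ℕ × ℕ)).powerset, s.card ≤ 2 →
      (s.Nonempty → (0, 0) ∈ s) →
      s = ∅ ∨ s = {(0, 0)} ∨ s = {(0, 0), (0, 1)} ∨ s = {(0, 0), (1, 0)} := by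
    decide
  simpa [YoungDiagram.ext_iff, cells_singleCell, cells_rowDomino, cells_colDomino] using
    hcases μ.cells (Finset.mem_powerset.2 hsub) h zero_mem_of_nonempty

lemma armZ_legZ_singleCell : armZ singleCell (0, 0) = 0 ∧ legZ singleCell (0, 0) = 0 := by
  simp only [armZ, legZ, colLen_eq_card, rowLen_eq_card]; decide

lemma armZ_legZ_rowDomino : armZ rowDomino (0, 0) = 0 ∧ legZ rowDomino (0, 0) = 1 ∧
    armZ rowDomino (0, 1) = 0 ∧ legZ rowDomino (0, 1) = 0 := by
  simp only [armZ, legZ, colLen_eq_card, rowLen_eq_card]; decide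

lemma armZ_legZ_colDomino : armZ colDomino (0, 0) = 1 ∧ legZ colDomino (0, 0) = 0 ∧
    armZ colDomino (1, 0) = 0 ∧ legZ colDomino (1, 0) = 0 := by
  simp only [armZ, legZ, colLen_eq_card, rowLen_eq_card]; decide

end YoungDiagram

open YoungDiagram

def sizeTwoTriples : List (YoungDiagram × YoungDiagram × YoungDiagram) :=
  [(rowDomino, ⊥, ⊥), (colDomino, ⊥, ⊥), (⊥, rowDomino, ⊥), (⊥, colDomino, ⊥),
    (⊥, ⊥, rowDomino), (⊥, ⊥, colDomino), (singleCell, singleCell, ⊥),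
    (singleCell, ⊥, singleCell), (⊥, singleCell, singleCell)]

lemma nodup_sizeTwoTriples : sizeTwoTriples.Nodup := by decide

lemma card_add_card_add_card_eq_two_iff (μ ν ρ : YoungDiagram) :
    μ.card + ν.card + ρ.card = 2 ↔ (μ, ν, ρ) ∈ sizeTwoTriples := by
  constructor
  · intro h
    rcases eq_bot_or_singleCell_or_rowDomino_or_colDomino (μ := μ) (by omega) with
      rfl | rfl | rfl | rfl <;>
    rcases eq_bot_or_singleCell_or_rowDomino_or_colDomino (μ := ν) (by omega) with
      rfl | rfl | rfl | rfl <;>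
    rcases eq_bot_or_singleCell_or_rowDomino_or_colDomino (μ := ρ) (by omega) with
      rfl | rfl | rfl | rfl <;>
    simp_all [sizeTwoTriples]
  · intro h
    simp only [sizeTwoTriples, List.mem_cons, List.not_mem_nil, or_false, Prod.mk.injEq] at h
    rcases h with ⟨rfl, rfl, rfl⟩ | ⟨rfl, rfl, rfl⟩ | ⟨rfl, rfl, rfl⟩ | ⟨rfl, rfl, rfl⟩ |
      ⟨rfl, rfl, rfl⟩ | ⟨rfl, rfl, rfl⟩ | ⟨rfl, rfl, rfl⟩ | ⟨rfl, rfl, rfl⟩ | ⟨rfl, rfl, rfl⟩ <;>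
    simp

section contribFactor

variable {u v : EqK}

lemma contribFactor_bot : contribFactor u v ⊥ = 1 := by
  simp [contribFactor]

lemma contribFactor_singleCell (hu : u ≠ 0) (huv : u ≠ v) :
    contribFactor u v singleCell = 2 * (v - 2 * u) / (v - u) := by
  obtain ⟨ha, hl⟩ := armZ_legZ_singleCell
  have hvu : v - u ≠ 0 := sub_ne_zero.2 huv.symm
  have hvu' : -u + v ≠ 0 := by rwa [neg_add_eq_sub]
  rw [contribFactor, cells_singleCell, Finset.prod_singleton, ha, hl]
  norm_num
  field_simp
  ring

lemma contribFactor_rowDomino (hu : u ≠ 0) (hv : v ≠ 0) (huv : u ≠ v) :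
    contribFactor u v rowDomino = 3 * (v - 2 * u) / v := by
  obtain ⟨ha₀, hl₀, ha₁, hl₁⟩ := armZ_legZ_rowDomino
  have hvu : v - u ≠ 0 := sub_ne_zero.2 huv.symm
  have hvu' : -u + v ≠ 0 := by rwa [neg_add_eq_sub]
  rw [contribFactor, cells_rowDomino, Finset.prod_pair (by decide), ha₀, hl₀, ha₁, hl₁]
  norm_num
  field_simp
  ring

lemma contribFactor_colDomino (hu : u ≠ 0) (hv : v ≠ 0) (huv : u ≠ v) :
    contribFactor u v colDomino =
      (u + v) * (2 * v - 3 * u) * (v - 2 * u) / (v * (v - u) ^ 2) := by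
  obtain ⟨ha₀, hl₀, ha₁, hl₁⟩ := armZ_legZ_colDomino
  have hvu : v - u ≠ 0 := sub_ne_zero.2 huv.symm
  have hvu' : -u + v ≠ 0 := by rwa [neg_add_eq_sub]
  rw [contribFactor, cells_colDomino, Finset.prod_pair (by decide), ha₀, hl₀, ha₁, hl₁]
  norm_num
  field_simp
  ring

end contribFactor

lemma s₁_ne_zero : s₁ ≠ 0 :=
  (map_ne_zero_iff _ (IsFractionRing.injective _ EqK)).2 (X_ne_zero 0)

lemma s₂_ne_zero : s₂ ≠ 0 :=
  (map_ne_zero_iff _ (IsFractionRing.injective _ EqK)).2 (X_ne_zero 1)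

lemma s₁_ne_s₂ : s₁ ≠ s₂ :=
  (IsFractionRing.injective _ EqK).ne (X_injective.ne (by decide))

lemma size_two_contributions_sum_eq {K : Type*} [Field K] {u v : K} (hu : u ≠ 0) (hv : v ≠ 0)
    (huv : u ≠ v) :
    1 + 1 + 3 * (v - 2 * u) / v + (u + v) * (2 * v - 3 * u) * (v - 2 * u) / (v * (v - u) ^ 2) +
      3 * (u - 2 * v) / u + (v + u) * (2 * u - 3 * v) * (u - 2 * v) / (u * (u - v) ^ 2) +
      2 * (v - 2 * u) / (v - u) + 2 * (u - 2 * v) / (u - v) +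
      2 * (v - 2 * u) / (v - u) * (2 * (u - 2 * v) / (u - v)) = 35 := by
  have huv' : u - v ≠ 0 := sub_ne_zero.2 huv
  have hvu : v - u ≠ 0 := sub_ne_zero.2 huv.symm
  field_simp
  ring

/-- The sum over all triples of partitions `Π = (π₁,π₂,π₃)` with
`|π₁| + |π₂| + |π₃| = 2` of the localization contributions `C(Π)` equals `35`;
this computes `DT(ℙ³;P;π^*[pt]) = ∫_{Hilb²(ℙ²)} c₄(E) = 35`. -/
theorem sum_localization_contributions_size_two
    (T : Finset (YoungDiagram × YoungDiagram × YoungDiagram))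
    (hT : ∀ tr : YoungDiagram × YoungDiagram × YoungDiagram,
      tr ∈ T ↔ tr.1.card + tr.2.1.card + tr.2.2.card = 2) :
    ∑ tr ∈ T, locContrib tr = 35 := by
  have hT' : T = sizeTwoTriples.toFinset := by
    ext ⟨μ, ν, ρ⟩
    rw [hT, List.mem_toFinset, card_add_card_add_card_eq_two_iff]
  rw [hT', List.sum_toFinset _ nodup_sizeTwoTriples]
  simp only [sizeTwoTriples, List.map_cons, List.map_nil, List.sum_cons, List.sum_nil, locContrib,
    contribFactor_bot, contribFactor_singleCell s₁_ne_zero s₁_ne_s₂,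
    contribFactor_singleCell s₂_ne_zero s₁_ne_s₂.symm,
    contribFactor_rowDomino s₁_ne_zero s₂_ne_zero s₁_ne_s₂,
    contribFactor_rowDomino s₂_ne_zero s₁_ne_zero s₁_ne_s₂.symm,
    contribFactor_colDomino s₁_ne_zero s₂_ne_zero s₁_ne_s₂,
    contribFactor_colDomino s₂_ne_zero s₁_ne_zero s₁_ne_s₂.symm, mul_one, one_mul, add_zero]
  linear_combination size_two_contributions_sum_eq s₁_ne_zero s₂_ne_zero s₁_ne_s₂
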